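/- arXiv:2512.18862 — 3 statements merged into one kernel-verified Lean document; each statement's English description precedes it below -/
import Mathlib

section
/- The map p(x) = 5x + 2 is the unique affine transformation x ↦ ax + b on Z/12Z (with a a unit) that maps K = {0, 3, 4, 7, 8, 9} onto its complement D = {1, 2, 5, 6, 10, 11}. -/
theorem Set.image_coe_eq_compl_iff {α β : Type*} [Fintype β] [DecidableEq β] (f : α → β)
    (s : Finset α) (t : Finset β) : f '' ↑s = (↑t)ᶜ ↔ s.image f = tᶜ := by
  rw [← Finset.coe_image, ← Finset.coe_compl, Finset.coe_inj]

theorem affine_image_eq_compl_iff (a b : ZMod 12) :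
    ({0, 3, 4, 7, 8, 9} : Finset (ZMod 12)).image (fun x => a * x + b)
      = ({0, 3, 4, 7, 8, 9} : Finset (ZMod 12))ᶜ ↔ a = 5 ∧ b = 2 := by
  revert a b
  decide

/-- p(x) = 5x + 2 is the unique affine transformation (with unit linear part)
mapping K = {0,3,4,7,8,9} onto its complement D = {1,2,5,6,10,11}. -/
theorem polarity_unique :
    ((fun x : ZMod 12 => 5 * x + 2) '' ({0, 3, 4, 7, 8, 9} : Set (ZMod 12))
      = ({0, 3, 4, 7, 8, 9} : Set (ZMod 12))ᶜ) ∧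
    (∀ a b : ZMod 12, IsUnit a →
      (fun x : ZMod 12 => a * x + b) '' ({0, 3, 4, 7, 8, 9} : Set (ZMod 12))
        = ({0, 3, 4, 7, 8, 9} : Set (ZMod 12))ᶜ → a = 5 ∧ b = 2) := by
  have image_eq_compl_iff (a b : ZMod 12) :
      (fun x => a * x + b) '' ({0, 3, 4, 7, 8, 9} : Set (ZMod 12))
        = ({0, 3, 4, 7, 8, 9} : Set (ZMod 12))ᶜ ↔ a = 5 ∧ b = 2 := by
    have h := Set.image_coe_eq_compl_iff (fun x => a * x + b)
      ({0, 3, 4, 7, 8, 9} : Finset (ZMod 12)) {0, 3, 4, 7, 8, 9}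
    push_cast at h
    rw [h, affine_image_eq_compl_iff]
  exact ⟨(image_eq_compl_iff 5 2).2 ⟨rfl, rfl⟩, fun a b _ h => (image_eq_compl_iff a b).1 h⟩
end

section
/- The map g(x + εy) = 5(x + εy) + ε·2 on the dual numbers Z/12Z[ε] maps K[ε] = {x + εk : x ∈ Z/12Z, k ∈ K} bijectively onto D[ε] = {x + εd : x ∈ Z/12Z, d ∈ D}, and vice versa. -/
/-! Since `5 * 5 = 1` and `5 * 2 + 2 = 0` in `ℤ/12ℤ`, the map `z ↦ 5z + 2ε` is an involution of
`ℤ/12ℤ[ε]`. It acts on the `ε`-part by `k ↦ 5k + 2`, which sends `K` into `D` and `D` into `K`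
(a finite check), so it restricts to mutually inverse bijections between `K[ε]` and `D[ε]`. -/

open DualNumber Function Set TrivSqZeroExt

theorem Function.Involutive.bijOn {α : Type*} {f : α → α} (hf : Involutive f) {s t : Set α}
    (hst : MapsTo f s t) (hts : MapsTo f t s) : BijOn f s t :=
  InvOn.bijOn ⟨fun x _ ↦ hf x, fun x _ ↦ hf x⟩ hst hts

theorem TrivSqZeroExt.inl_ofNat {R M : Type*} [AddMonoidWithOne R] [AddMonoid M] (n : ℕ)
    [n.AtLeastTwo] : (inl ofNat(n) : TrivSqZeroExt R M) = ofNat(n) :=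
  inl_natCast n

namespace DualNumber

variable {R : Type*} [CommSemiring R]

theorem fst_inl_mul_add_inl_mul_eps (a b : R) (z : R[ε]) :
    (inl a * z + inl b * ε).fst = a * z.fst := by
  simp

theorem snd_inl_mul_add_inl_mul_eps (a b : R) (z : R[ε]) :
    (inl a * z + inl b * ε).snd = a * z.snd + b := by
  simp

theorem involutive_inl_mul_add_inl_mul_eps {a b : R} (ha : a * a = 1) (hab : a * b + b = 0) :
    Involutive fun z : R[ε] ↦ inl a * z + inl b * ε := by
  intro z
  ext
  · rw [fst_inl_mul_add_inl_mul_eps, fst_inl_mul_add_inl_mul_eps, ← mul_assoc, ha, one_mul]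
  · rw [snd_inl_mul_add_inl_mul_eps, snd_inl_mul_add_inl_mul_eps, mul_add, ← mul_assoc, ha,
      one_mul, add_assoc, hab, add_zero]

theorem mapsTo_inl_mul_add_inl_mul_eps {a b : R} {S T : Set R}
    (h : MapsTo (fun k ↦ a * k + b) S T) :
    MapsTo (fun z : R[ε] ↦ inl a * z + inl b * ε) {z | z.snd ∈ S} {z | z.snd ∈ T} := by
  intro z (hz : z.snd ∈ S)
  show (_ : R[ε]).snd ∈ T
  rw [snd_inl_mul_add_inl_mul_eps]
  exact h hz

end DualNumber

/-- The induced polarity z ↦ 5z + 2ε on ℤ/12ℤ[ε] exchanges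
K[ε] = {x + εk : k ∈ K} and D[ε] = {x + εd : d ∈ D} bijectively. -/
theorem induced_polarity_bijOn :
    Set.BijOn (fun z : DualNumber (ZMod 12) => 5 * z + 2 * ε)
      {z : DualNumber (ZMod 12) | z.snd ∈ ({0, 3, 4, 7, 8, 9} : Set (ZMod 12))}
      {z : DualNumber (ZMod 12) | z.snd ∈ ({1, 2, 5, 6, 10, 11} : Set (ZMod 12))} ∧
    Set.BijOn (fun z : DualNumber (ZMod 12) => 5 * z + 2 * ε)
      {z : DualNumber (ZMod 12) | z.snd ∈ ({1, 2, 5, 6, 10, 11} : Set (ZMod 12))}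
      {z : DualNumber (ZMod 12) | z.snd ∈ ({0, 3, 4, 7, 8, 9} : Set (ZMod 12))} := by
  simp only [← inl_ofNat]
  have hf : Involutive fun z : (ZMod 12)[ε] ↦ inl 5 * z + inl 2 * ε :=
    involutive_inl_mul_add_inl_mul_eps (by decide) (by decide)
  have hKD : MapsTo (fun k : ZMod 12 ↦ 5 * k + 2) {0, 3, 4, 7, 8, 9} {1, 2, 5, 6, 10, 11} :=
    fun k ↦ by revert k; decide
  have hDK : MapsTo (fun k : ZMod 12 ↦ 5 * k + 2) {1, 2, 5, 6, 10, 11} {0, 3, 4, 7, 8, 9} :=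
    fun k ↦ by revert k; decide
  exact ⟨hf.bijOn (mapsTo_inl_mul_add_inl_mul_eps hKD) (mapsTo_inl_mul_add_inl_mul_eps hDK),
    hf.bijOn (mapsTo_inl_mul_add_inl_mul_eps hDK) (mapsTo_inl_mul_add_inl_mul_eps hKD)⟩
end

section
/- For every consonance ξ = x + εk with k ∈ K, the number of admissible successors under any counterpoint symmetry is at least 42 (Little Theorem of Counterpoint), where admissible successors are the elements of g(K[ε]) ∩ K[ε] for a counterpoint symmetry g of ξ. -/
open DualNumber

/-- Consonances in ℤ/12ℤ. -/
def Kcons : Set (ZMod 12) := {0, 3, 4, 7, 8, 9}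

/-- Dissonances in ℤ/12ℤ. -/
def Dcons : Set (ZMod 12) := {1, 2, 5, 6, 10, 11}

/-- K[ε]: counterpoint intervals with consonant ε-part. -/
def Keps : Set (DualNumber (ZMod 12)) := {z | z.snd ∈ Kcons}

/-- D[ε]: counterpoint intervals with dissonant ε-part. -/
def Deps : Set (DualNumber (ZMod 12)) := {z | z.snd ∈ Dcons}

/-- The induced polarity z ↦ 5z + 2ε. -/
def polEps (z : DualNumber (ZMod 12)) : DualNumber (ZMod 12) := 5 * z + 2 * ε

/-- Membership in the group H of symmetries z ↦ uz + εw. -/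
def memH (g : DualNumber (ZMod 12) → DualNumber (ZMod 12)) : Prop :=
  ∃ (u : (DualNumber (ZMod 12))ˣ) (w : ZMod 12),
    g = fun z => (u : DualNumber (ZMod 12)) * z + w • ε

/-- Conditions (1) and (2) for a counterpoint symmetry of ξ. -/
def PreCtpSym (ξ : DualNumber (ZMod 12))
    (g : DualNumber (ZMod 12) → DualNumber (ZMod 12)) : Prop :=
  memH g ∧ ξ ∈ g '' Deps ∧
    polEps '' (g '' Keps) = g '' Deps ∧ polEps '' (g '' Deps) = g '' Keps

/-- A counterpoint symmetry for ξ: satisfies (1), (2) and maximizes |g(K[ε]) ∩ K[ε]|. -/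
def IsCtpSym (ξ : DualNumber (ZMod 12))
    (g : DualNumber (ZMod 12) → DualNumber (ZMod 12)) : Prop :=
  PreCtpSym ξ g ∧
    ∀ g', PreCtpSym ξ g' →
      Nat.card ↥(g' '' Keps ∩ Keps) ≤ Nat.card ↥(g '' Keps ∩ Keps)

/-!
The shears `z ↦ (1 + 3ε) z + wε` with `4w = 0` commute with the polarity `z ↦ 5z + 2ε`, which
exchanges `K[ε]` and `D[ε]`, so they satisfy condition (2). For a consonance `ξ = x + εk` there is a
multiple `c` of 3 with `k - c` dissonant, and `w = c - 3x` puts `ξ` into the image of `D[ε]`. Each of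
these shears has exactly 42 admissible successors, so by maximality every counterpoint symmetry of `ξ`
has at least 42.
-/

open TrivSqZeroExt

instance {R : Type*} [Fintype R] : Fintype R[ε] := inferInstanceAs (Fintype (R × R))

section OfNat

variable {R M : Type*} [AddMonoidWithOne R] [AddMonoid M] (n : ℕ) [n.AtLeastTwo]

@[simp] lemma TrivSqZeroExt.fst_ofNat : (ofNat(n) : TrivSqZeroExt R M).fst = ofNat(n) :=
  (fst_natCast n).trans (Nat.cast_ofNat)

@[simp] lemma TrivSqZeroExt.snd_ofNat : (ofNat(n) : TrivSqZeroExt R M).snd = 0 := snd_natCast n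

end OfNat

section Shear

variable {R : Type*} [CommRing R]

def shearUnit (b : R) : R[ε]ˣ where
  val := 1 + b • ε
  inv := 1 - b • ε
  val_inv := by ext <;> simp
  inv_val := by ext <;> simp

def shear (b w : R) (z : R[ε]) : R[ε] := (shearUnit b : R[ε]) * z + w • ε

variable (b w : R) (z : R[ε])

@[simp] lemma shear_fst : (shear b w z).fst = z.fst := by simp [shear, shearUnit]

@[simp] lemma shear_snd : (shear b w z).snd = z.snd + b * z.fst + w := by
  simp [shear, shearUnit]

lemma shear_neg_shear : shear (-b) (-w) (shear b w z) = z := by ext <;> simp; ring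

lemma shear_shear_neg : shear b w (shear (-b) (-w) z) = z := by ext <;> simp; ring

lemma image_shear_eq_preimage : Set.image (shear b w) = Set.preimage (shear (-b) (-w)) :=
  Set.image_eq_preimage_of_inverse (shear_neg_shear b w) (shear_shear_neg b w)

end Shear

@[simp] lemma polEps_fst (z : (ZMod 12)[ε]) : (polEps z).fst = 5 * z.fst := by simp [polEps]
@[simp] lemma polEps_snd (z : (ZMod 12)[ε]) : (polEps z).snd = 5 * z.snd + 2 := by
  simp [polEps]

lemma polEps_involutive : Function.Involutive polEps := fun z => by
  ext <;> simp <;> ring_nf <;> reduce_mod_char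

lemma image_polEps_Keps : polEps '' Keps = Deps := by
  have hpol : ∀ y : ZMod 12, 5 * y + 2 ∈ Kcons ↔ y ∈ Dcons := by unfold Kcons Dcons; decide
  rw [polEps_involutive.image_eq_preimage_symm]
  ext z
  show (polEps z).snd ∈ Kcons ↔ z.snd ∈ Dcons
  rw [polEps_snd]
  exact hpol z.snd

lemma image_polEps_Deps : polEps '' Deps = Keps := by
  rw [← image_polEps_Keps, Set.image_image]
  simp only [polEps_involutive _, Set.image_id']

lemma commute_polEps_shear (b : ZMod 12) {w : ZMod 12} (hw : 4 * w = 0) :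
    Function.Commute polEps (shear b w) := fun z => by
  ext <;> simp
  linear_combination hw

lemma preCtpSym_shear {ξ : (ZMod 12)[ε]} {b w : ZMod 12} (hw : 4 * w = 0)
    (hξ : ξ ∈ shear b w '' Deps) : PreCtpSym ξ (shear b w) := by
  have hcomm := (commute_polEps_shear b hw).set_image
  refine ⟨⟨shearUnit b, w, rfl⟩, hξ, ?_, ?_⟩
  · rw [hcomm, image_polEps_Keps]
  · rw [hcomm, image_polEps_Deps]

lemma exists_mem_image_shear_three_Deps {ξ : (ZMod 12)[ε]} (hξ : ξ ∈ Keps) :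
    ∃ w : ZMod 12, 4 * w = 0 ∧ ξ ∈ shear 3 w '' Deps := by
  have hshift : ∀ k ∈ Kcons, ∃ c : ZMod 12, 4 * c = 0 ∧ k - c ∈ Dcons := by
    unfold Kcons Dcons; decide
  obtain ⟨c, hc, hkc⟩ := hshift ξ.snd hξ
  refine ⟨c - 3 * ξ.fst, ?_, ξ - c • ε, show (ξ - c • ε).snd ∈ Dcons by simpa using hkc, ?_⟩
  · have h12 : (12 : ZMod 12) = 0 := rfl
    linear_combination hc - ξ.fst * h12
  · ext <;> simp

lemma card_image_shear_three_Keps_inter_Keps {w : ZMod 12} (hw : 4 * w = 0) :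
    Nat.card ↥(shear 3 w '' Keps ∩ Keps) = 42 := by
  rw [image_shear_eq_preimage]
  unfold Keps Kcons
  simp only [Set.preimage_ofPred_eq, ← Set.ofPred_and, shear_snd]
  rw [Nat.card_eq_fintype_card]
  revert w
  decide

/-- Little Theorem of Counterpoint: every consonance admits at least 42
admissible successors under any of its counterpoint symmetries. -/
theorem little_theorem_of_counterpoint :
    ∀ ξ ∈ Keps, ∀ g, IsCtpSym ξ g → 42 ≤ Nat.card ↥(g '' Keps ∩ Keps) := by
  intro ξ hξ g hg
  obtain ⟨w, hw, hξw⟩ := exists_mem_image_shear_three_Deps hξ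
  calc 42 = Nat.card ↥(shear 3 w '' Keps ∩ Keps) :=
        (card_image_shear_three_Keps_inter_Keps hw).symm
    _ ≤ Nat.card ↥(g '' Keps ∩ Keps) := hg.2 _ (preCtpSym_shear hw hξw)
end
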